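/- For all natural numbers k ≥ 1 and real numbers R > 0 and 0 ≤ x < R, ∫_{-1}^{1} (1-s²)^{k-1} / (R² + x² + 2Rxs)^{2k-1} ds ≥ (√π · Γ(k)/Γ(k+1/2)) · R^{-(4k-2)}, with equality if and only if x = 0. -/

import Mathlib

/-!
Write `q(s) = R² + x² + 2Rxs` and weight `(1 - s²)ⁿ` with `n = k - 1`. The weighted mean of
`q^(-(n + 1/2))` over `[-1, 1]` is exactly `R^(-(2n + 1))`: this is the mean-value property of the
Newtonian kernel in dimension `2n + 3`. Here it is obtained by substituting `w = √q`, which turns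
the integral into one of `(4x² - (w - (R² - x²)/w)²)ⁿ` over `[R - x, R + x]`, and then using the
involution `w ↦ (R² - x²)/w` to pass to `v = w - (R² - x²)/w`. Cauchy–Schwarz against the weight
then gives `∫ (1 - s²)ⁿ q^(-(2n + 1)) ≥ R^(-(4n + 2)) ∫ (1 - s²)ⁿ`, strictly unless `q` is
constant, i.e. unless `x = 0`; and `∫ (1 - s²)ⁿ = √π Γ(n + 1)/Γ(n + 3/2)` by Wallis' formula.
-/

open Real intervalIntegral Set

lemma sqrt_pi_mul_Gamma_div_Gamma_add_half (n : ℕ) :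
    √π * Gamma (n + 1) / Gamma (n + 1 + 1 / 2) =
      2 * ∏ i ∈ Finset.range n, (2 * (i : ℝ) + 2) / (2 * i + 3) := by
  induction n with
  | zero =>
    have : √π ≠ 0 := by positivity
    rw [Nat.cast_zero, zero_add, Gamma_one, show (1:ℝ) + 1 / 2 = 1 / 2 + 1 by norm_num,
      Gamma_add_one (by norm_num), Gamma_one_half_eq, Finset.prod_range_zero]
    field_simp
  | succ n ih =>
    have hΓ : 0 < Gamma (n + 1 + 1 / 2) := Gamma_pos_of_pos (by positivity)
    rw [Finset.prod_range_succ, ← mul_assoc, ← ih]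
    push_cast
    rw [Gamma_add_one (s := n + 1) (by positivity),
      show (n : ℝ) + 1 + 1 + 1 / 2 = n + 1 + 1 / 2 + 1 by ring,
      Gamma_add_one (s := n + 1 + 1 / 2) (by positivity)]
    field_simp
    ring

lemma integral_one_sub_sq_pow (n : ℕ) :
    ∫ s in (-1:ℝ)..1, (1 - s ^ 2) ^ n = √π * Gamma (n + 1) / Gamma (n + 1 + 1 / 2) := by
  have hsin := integral_sin_pow_odd_mul_cos_pow (a := 0) (b := π) n 0
  simp only [pow_zero, mul_one, one_mul, cos_zero, cos_pi] at hsin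
  rw [← hsin, integral_sin_pow_odd, sqrt_pi_mul_Gamma_div_Gamma_add_half]

lemma integral_sq_sub_sq_pow (n : ℕ) (r : ℝ) :
    ∫ v in (-r)..r, (r ^ 2 - v ^ 2) ^ n = r ^ (2 * n + 1) * ∫ s in (-1:ℝ)..1, (1 - s ^ 2) ^ n := by
  have h := smul_integral_comp_mul_left (fun v => (r ^ 2 - v ^ 2) ^ n) r (a := -1) (b := 1)
  simp only [mul_neg, mul_one, smul_eq_mul] at h
  rw [← h, ← integral_const_mul, ← integral_const_mul]
  congr 1 with s
  rw [show r ^ 2 - (r * s) ^ 2 = r ^ 2 * (1 - s ^ 2) by ring, mul_pow]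
  ring

lemma integral_comp_sub_mul_div {F : ℝ → ℝ} (hF : Continuous F) (hFeven : ∀ v, F (-v) = F v)
    {a b : ℝ} (ha : 0 < a) (hb : 0 < b) :
    ∫ w in a..b, F (w - a * b / w) = (∫ v in (a - b)..(b - a), F v) / 2 := by
  have hpos : ∀ w ∈ uIcc a b, 0 < w := fun w hw => (lt_min ha hb).trans_le hw.1
  have hinv : ∀ w ∈ uIcc a b, HasDerivAt (fun w => a * b / w) (-(a * b) / w ^ 2) w := by
    intro w hw
    simpa [div_eq_mul_inv, neg_div] using (hasDerivAt_inv (hpos w hw).ne').const_mul (a * b)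
  have hcont : ∀ c, ContinuousOn (fun w => c / w ^ 2) (uIcc a b) := fun c =>
    continuousOn_const.div (continuousOn_pow 2) fun w hw => pow_ne_zero 2 (hpos w hw).ne'
  have hG : ContinuousOn (fun w => F (w - a * b / w)) (uIcc a b) :=
    hF.comp_continuousOn (continuousOn_id.sub
      (continuousOn_const.div continuousOn_id fun w hw => (hpos w hw).ne'))
  have hsub : ∫ w in a..b, F (w - a * b / w) * (1 + a * b / w ^ 2) =
      ∫ v in (a - b)..(b - a), F v := by
    have h := integral_comp_mul_deriv (g := F) (f := fun w => w - a * b / w)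
      (f' := fun w => 1 + a * b / w ^ 2)
      (fun w hw => ((hasDerivAt_id' w).sub (hinv w hw)).congr_deriv (by ring))
      (continuousOn_const.add (hcont _)) hF
    rwa [show a - a * b / a = a - b by field_simp, show b - a * b / b = b - a by field_simp] at h
  -- the involution `w ↦ ab/w` of `[a, b]` maps `w - ab/w` to its negative
  have hflip : ∫ w in a..b, F (w - a * b / w) * (a * b / w ^ 2) =
      ∫ w in a..b, F (w - a * b / w) := by
    have h := integral_comp_mul_deriv' (g := fun w => F (w - a * b / w))
      (f := fun w => a * b / w) hinv (hcont _) ?_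
    · rw [show a * b / a = b by field_simp, show a * b / b = a by field_simp] at h
      rw [← neg_neg (∫ w in a..b, F (w - a * b / w)), ← integral_symm, ← h, ← integral_neg]
      refine integral_congr fun w hw => ?_
      have hw0 := (hpos w hw).ne'
      simp only [Function.comp_apply]
      rw [show a * b / (a * b / w) = w by field_simp, ← hFeven, neg_sub]
      ring
    · exact hF.comp_continuousOn (continuousOn_id.sub (continuousOn_const.div continuousOn_id
        fun _ ⟨w, hw, hu⟩ => hu ▸ (div_pos (mul_pos ha hb) (hpos w hw)).ne'))
  have hsplit : ∫ w in a..b, F (w - a * b / w) * (1 + a * b / w ^ 2) =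
      (∫ w in a..b, F (w - a * b / w)) + ∫ w in a..b, F (w - a * b / w) * (a * b / w ^ 2) := by
    simp only [mul_add, mul_one]
    exact integral_add hG.intervalIntegrable (hG.mul (hcont _)).intervalIntegrable
  linarith

lemma integral_one_sub_sq_pow_div_sqrt_pow_eq (n : ℕ) {R x : ℝ} (hx : 0 < x) (hxR : x < R) :
    ∫ s in (-1:ℝ)..1, (1 - s ^ 2) ^ n / √(R ^ 2 + x ^ 2 + 2 * R * x * s) ^ (2 * n + 1) =
      (∫ w in (R - x)..(R + x), ((2 * x) ^ 2 - (w - (R - x) * (R + x) / w) ^ 2) ^ n) /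
        ((2 * R * x) ^ (2 * n) * (R * x)) := by
  have hR : 0 < R := hx.trans hxR
  have hpos : ∀ w ∈ uIcc (R - x) (R + x), 0 < w := fun w hw =>
    (lt_min (sub_pos.mpr hxR) (by linarith)).trans_le hw.1
  set σ : ℝ → ℝ := fun w => (w ^ 2 - R ^ 2 - x ^ 2) / (2 * R * x) with hσ
  have hqσ : ∀ w, R ^ 2 + x ^ 2 + 2 * R * x * σ w = w ^ 2 := fun w => by
    simp only [hσ]; field_simp; ring
  -- `s = σ w` is the substitution `w = √(R² + x² + 2Rxs)`
  have hsubst := integral_comp_mul_deriv' (a := R - x) (b := R + x) (f := σ)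
    (f' := fun w => w / (R * x))
    (g := fun s => (1 - s ^ 2) ^ n / √(R ^ 2 + x ^ 2 + 2 * R * x * s) ^ (2 * n + 1))
    (fun w _ => by
      refine (((hasDerivAt_pow 2 w).sub_const (R ^ 2)).sub_const (x ^ 2)).div_const _
        |>.congr_deriv ?_
      field_simp; ring)
    (by fun_prop) ?_
  · have hσa : σ (R - x) = -1 := by simp only [hσ]; field_simp; ring
    have hσb : σ (R + x) = 1 := by simp only [hσ]; field_simp; ring
    rw [hσa, hσb] at hsubst
    rw [← hsubst, ← integral_div]
    refine integral_congr fun w hw => ?_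
    have hw0 := hpos w hw
    have h1 : 1 - σ w ^ 2 =
        w ^ 2 * ((2 * x) ^ 2 - (w - (R - x) * (R + x) / w) ^ 2) / (2 * R * x) ^ 2 := by
      simp only [hσ]; field_simp; ring
    simp only [Function.comp_apply]
    rw [hqσ, sqrt_sq hw0.le, h1]
    generalize (2 * x) ^ 2 - (w - (R - x) * (R + x) / w) ^ 2 = P
    rw [div_pow, mul_pow, ← pow_mul, ← pow_mul]
    field_simp
    ring
  · refine ContinuousOn.div (by fun_prop) (Continuous.continuousOn (by fun_prop)) ?_
    rintro _ ⟨w, hw, rfl⟩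
    rw [hqσ, sqrt_sq (hpos w hw).le]
    exact pow_ne_zero _ (hpos w hw).ne'

lemma integral_one_sub_sq_pow_div_sqrt_pow (n : ℕ) {R x : ℝ} (hx : 0 < x) (hxR : x < R) :
    ∫ s in (-1:ℝ)..1, (1 - s ^ 2) ^ n / √(R ^ 2 + x ^ 2 + 2 * R * x * s) ^ (2 * n + 1) =
      (∫ s in (-1:ℝ)..1, (1 - s ^ 2) ^ n) / R ^ (2 * n + 1) := by
  have hR : 0 < R := hx.trans hxR
  rw [integral_one_sub_sq_pow_div_sqrt_pow_eq n hx hxR,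
    integral_comp_sub_mul_div (F := fun v => ((2 * x) ^ 2 - v ^ 2) ^ n) (by fun_prop)
      (fun v => by simp only [neg_sq]) (by linarith) (by linarith),
    show R - x - (R + x) = -(2 * x) by ring, show R + x - (R - x) = 2 * x by ring,
    integral_sq_sub_sq_pow]
  field_simp
  ring

lemma sq_mul_integral_lt_integral_mul_sq {w f : ℝ → ℝ} {a b θ : ℝ} (hab : a < b)
    (hw : ContinuousOn w (Icc a b)) (hf : ContinuousOn f (Icc a b))
    (hw_nonneg : ∀ t ∈ Icc a b, 0 ≤ w t)
    (hmean : ∫ t in a..b, w t * f t = θ * ∫ t in a..b, w t)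
    (hne : ∃ t ∈ Icc a b, 0 < w t ∧ f t ≠ θ) :
    θ ^ 2 * ∫ t in a..b, w t < ∫ t in a..b, w t * f t ^ 2 := by
  have hpos : 0 < ∫ t in a..b, w t * (f t - θ) ^ 2 := by
    rw [← integral_zero (a := a) (b := b)]
    obtain ⟨t, ht, hwt, hft⟩ := hne
    refine integral_lt_integral_of_continuousOn_of_le_of_exists_lt hab continuousOn_const
      (hw.mul ((hf.sub continuousOn_const).pow 2))
      (fun t ht => mul_nonneg (hw_nonneg t (Ioc_subset_Icc_self ht)) (sq_nonneg _))
      ⟨t, ht, mul_pos hwt ?_⟩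
    have := sub_ne_zero.mpr hft
    positivity
  have hint : ∀ g : ℝ → ℝ, ContinuousOn g (Icc a b) → IntervalIntegrable g MeasureTheory.volume a b :=
    fun g hg => hg.intervalIntegrable_of_Icc hab.le
  have hexpand : ∫ t in a..b, w t * (f t - θ) ^ 2 =
      (∫ t in a..b, w t * f t ^ 2) - 2 * θ * (∫ t in a..b, w t * f t) + θ ^ 2 * ∫ t in a..b, w t := by
    rw [← integral_const_mul, ← integral_const_mul, ← integral_sub, ← integral_add]
    · exact integral_congr fun t _ => by ring
    all_goals exact hint _ (by fun_prop)
  rw [hexpand, hmean] at hpos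
  linarith

lemma integral_one_sub_sq_pow_div_lt (n : ℕ) {R x : ℝ} (hx : 0 < x) (hxR : x < R) :
    (∫ s in (-1:ℝ)..1, (1 - s ^ 2) ^ n) / R ^ (4 * n + 2) <
      ∫ s in (-1:ℝ)..1, (1 - s ^ 2) ^ n / (R ^ 2 + x ^ 2 + 2 * R * x * s) ^ (2 * n + 1) := by
  have hR : 0 < R := hx.trans hxR
  have hq : ∀ s ∈ Icc (-1:ℝ) 1, 0 < R ^ 2 + x ^ 2 + 2 * R * x * s := fun s hs => by
    nlinarith [hs.1, mul_pos hR hx]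
  have hlt : R < √(R ^ 2 + x ^ 2) := lt_sqrt_of_sq_lt (by nlinarith)
  have h := sq_mul_integral_lt_integral_mul_sq (w := fun s => (1 - s ^ 2) ^ n)
    (f := fun s => 1 / √(R ^ 2 + x ^ 2 + 2 * R * x * s) ^ (2 * n + 1))
    (a := -1) (b := 1) (θ := 1 / R ^ (2 * n + 1)) (by norm_num) (by fun_prop) ?_ ?_ ?_
    ⟨0, by norm_num, by norm_num, ?_⟩
  · convert h using 1
    · rw [div_pow, one_pow, ← pow_mul]
      ring_nf
    · refine integral_congr fun s hs => ?_
      rw [uIcc_of_le (by norm_num)] at hs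
      rw [div_pow, one_pow, ← pow_mul, mul_comm _ 2, pow_mul, sq_sqrt (hq s hs).le, mul_one_div]
  · exact continuousOn_const.div (by fun_prop) fun s hs => (pow_pos (sqrt_pos.2 (hq s hs)) _).ne'
  · exact fun s hs => pow_nonneg (by nlinarith [hs.1, hs.2]) n
  · simp only [mul_one_div]
    rw [integral_one_sub_sq_pow_div_sqrt_pow n hx hxR]
    ring
  · rw [mul_zero, add_zero]
    exact (one_div_lt_one_div_of_lt (by positivity) (pow_lt_pow_left₀ hlt hR.le (by omega))).ne

theorem stmt_1_general (k : ℕ) (hk : 1 ≤ k) (R x : ℝ) (hx : 0 ≤ x) (hxR : x < R) :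
    (∫ s in (-1:ℝ)..1, (1 - s^2)^(k-1) / (R^2 + x^2 + 2*R*x*s) ^ (2*k - 1)) ≥
      Real.sqrt π * Real.Gamma k / Real.Gamma (k + 1/2) / R ^ (4*k - 2) ∧
    ((∫ s in (-1:ℝ)..1, (1 - s^2)^(k-1) / (R^2 + x^2 + 2*R*x*s) ^ (2*k - 1)) =
      Real.sqrt π * Real.Gamma k / Real.Gamma (k + 1/2) / R ^ (4*k - 2) ↔ x = 0) := by
  obtain ⟨n, rfl⟩ : ∃ n, k = n + 1 := ⟨k - 1, by omega⟩
  have hconst : √π * Gamma ↑(n + 1) / Gamma (↑(n + 1) + 1 / 2) / R ^ (4 * (n + 1) - 2) =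
      (∫ s in (-1:ℝ)..1, (1 - s ^ 2) ^ n) / R ^ (4 * n + 2) := by
    rw [integral_one_sub_sq_pow, show 4 * (n + 1) - 2 = 4 * n + 2 by omega]
    push_cast
    rfl
  rw [hconst, Nat.add_sub_cancel, show 2 * (n + 1) - 1 = 2 * n + 1 by omega]
  rcases hx.eq_or_lt with rfl | hx
  · have hzero : ∫ s in (-1:ℝ)..1, (1 - s ^ 2) ^ n / (R ^ 2 + 0 ^ 2 + 2 * R * 0 * s) ^ (2 * n + 1) =
        (∫ s in (-1:ℝ)..1, (1 - s ^ 2) ^ n) / R ^ (4 * n + 2) := by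
      simp only [zero_pow two_ne_zero, add_zero, mul_zero, zero_mul, ← pow_mul, integral_div]
      ring_nf
    exact ⟨hzero.ge, iff_of_true hzero rfl⟩
  · have hlt := integral_one_sub_sq_pow_div_lt n hx hxR
    exact ⟨hlt.le, iff_of_false hlt.ne' hx.ne'⟩

theorem stmt_1 (k : ℕ) (hk : 1 ≤ k) (R x : ℝ) (hR : 0 < R) (hx : 0 ≤ x) (hxR : x < R) :
    (∫ s in (-1:ℝ)..1, (1 - s^2)^(k-1) / (R^2 + x^2 + 2*R*x*s) ^ (2*k - 1)) ≥
      Real.sqrt π * Real.Gamma k / Real.Gamma (k + 1/2) / R ^ (4*k - 2) ∧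
    ((∫ s in (-1:ℝ)..1, (1 - s^2)^(k-1) / (R^2 + x^2 + 2*R*x*s) ^ (2*k - 1)) =
      Real.sqrt π * Real.Gamma k / Real.Gamma (k + 1/2) / R ^ (4*k - 2) ↔ x = 0) :=
  stmt_1_general k hk R x hx hxR
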